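/- arXiv:0801.3354 — 2 statements merged into one kernel-verified Lean document; each statement's English description precedes it below -/
import Mathlib

section
/- Let M be a d×d integer matrix, G = {x ∈ ℚᵈ : Mⁿx ∈ ℤᵈ for some n > 0}, H = {x ∈ ℚᵈ : Mⁿx = 0 for some n > 0}, and K = G/H. The map induced by M on K is an automorphism of K (it is well-defined, injective, and surjective). -/
section Aux
variable {d : ℕ} (M : Matrix (Fin d) (Fin d) ℤ)

private lemma mapPowAux (n : ℕ) :
    (M ^ n).map (Int.cast : ℤ → ℚ) = (M.map (Int.cast : ℤ → ℚ)) ^ n := by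
  simpa using map_pow ((Int.castRingHom ℚ).mapMatrix) M n

private lemma mulVecLinPowAux (Q : Matrix (Fin d) (Fin d) ℚ) (k : ℕ) (x : Fin d → ℚ) :
    ((Matrix.mulVecLin Q) ^ k) x = (Q ^ k).mulVec x := by
  induction k generalizing x with
  | zero => simp [Matrix.mulVec_one]
  | succ k ih =>
      rw [pow_succ, Module.End.mul_apply, Matrix.mulVecLin_apply, ih,
        Matrix.mulVec_mulVec, ← pow_succ]

private lemma intEntryAux (A : Matrix (Fin d) (Fin d) ℤ) (v : Fin d → ℚ)
    (z : Fin d → ℤ) (hv : ∀ j, v j = (z j : ℚ)) (i : Fin d) :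
    ∃ w : ℤ, (A.map (Int.cast : ℤ → ℚ)).mulVec v i = (w : ℚ) := by
  refine ⟨∑ j, A i j * z j, ?_⟩
  simp only [Matrix.mulVec, dotProduct, Matrix.map_apply, hv]
  push_cast
  rfl

end Aux

/-- `grpG M` : the set of rational vectors mapped into `ℤᵈ` by some positive
power of the integer matrix `M`. -/
def grpG {d : ℕ} (M : Matrix (Fin d) (Fin d) ℤ) : Set (Fin d → ℚ) :=
  {x | ∃ n : ℕ, 0 < n ∧ ∀ i, ∃ z : ℤ,
    ((M ^ n).map (Int.cast : ℤ → ℚ)).mulVec x i = (z : ℚ)}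

/-- `grpH M` : the set of rational vectors killed by some positive power of the
integer matrix `M`. -/
def grpH {d : ℕ} (M : Matrix (Fin d) (Fin d) ℤ) : Set (Fin d → ℚ) :=
  {x | ∃ n : ℕ, 0 < n ∧ ((M ^ n).map (Int.cast : ℤ → ℚ)).mulVec x = 0}

/-- The map induced by `M` on `K = G/H` (sending `x + H` to `Mx + H`) is an
automorphism of `K`: it is well defined (`M` maps `G` into `G` and `H` into
`H`), injective (`Mx ∈ H` implies `x ∈ H`), and surjective (for every `x ∈ G`
there is `y ∈ G` with `x − My ∈ H`). -/
theorem inducedMap_automorphism {d : ℕ} (M : Matrix (Fin d) (Fin d) ℤ) :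
    (∀ x ∈ grpG M, (M.map (Int.cast : ℤ → ℚ)).mulVec x ∈ grpG M) ∧
    (∀ x ∈ grpH M, (M.map (Int.cast : ℤ → ℚ)).mulVec x ∈ grpH M) ∧
    (∀ x ∈ grpG M, (M.map (Int.cast : ℤ → ℚ)).mulVec x ∈ grpH M → x ∈ grpH M) ∧
    (∀ x ∈ grpG M, ∃ y ∈ grpG M,
      x - (M.map (Int.cast : ℤ → ℚ)).mulVec y ∈ grpH M) := by
  set Q : Matrix (Fin d) (Fin d) ℚ := M.map (Int.cast : ℤ → ℚ) with hQ
  -- commutation of `Q^n` with `Q` through `mulVec`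
  have hcomm : ∀ (n : ℕ) (x : Fin d → ℚ),
      (Q ^ n).mulVec (Q.mulVec x) = Q.mulVec ((Q ^ n).mulVec x) := by
    intro n x
    rw [Matrix.mulVec_mulVec, Matrix.mulVec_mulVec, ← pow_succ, ← pow_succ']
  refine ⟨?_, ?_, ?_, ?_⟩
  · -- G mapped into G
    rintro x ⟨n, hn, hx⟩
    choose z hz using hx
    refine ⟨n, hn, fun i => ?_⟩
    rw [mapPowAux, hcomm]
    exact intEntryAux M ((Q ^ n).mulVec x) z
      (fun j => by rw [← hz j, mapPowAux]) i
  · -- H mapped into H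
    rintro x ⟨n, hn, hx⟩
    refine ⟨n, hn, ?_⟩
    rw [mapPowAux] at hx ⊢
    rw [hcomm, hx, Matrix.mulVec_zero]
  · -- injectivity
    rintro x - ⟨n, hn, hx⟩
    refine ⟨n + 1, n.succ_pos, ?_⟩
    rw [mapPowAux] at hx ⊢
    rw [pow_succ, ← Matrix.mulVec_mulVec, hx]
  · -- surjectivity
    rintro x ⟨n, hn, hx⟩
    choose z hz using hx
    set f : (Fin d → ℚ) →ₗ[ℚ] (Fin d → ℚ) := Matrix.mulVecLin Q with hf
    obtain ⟨N, hN⟩ := IsArtinian.monotone_stabilizes f.iterateRange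
    set K := N + 1 with hK
    have hrange : LinearMap.range (f ^ K) = LinearMap.range (f ^ (K + 1)) := by
      have h1 := hN (N + 1) (Nat.le_succ N)
      have h2 := hN (N + 2) (by omega)
      exact (h1.symm.trans h2 :)
    have hmem : (Q ^ K).mulVec x ∈ LinearMap.range (f ^ (K + 1)) := by
      rw [← hrange]
      exact ⟨x, mulVecLinPowAux Q K x⟩
    obtain ⟨y, hy⟩ := hmem
    rw [mulVecLinPowAux] at hy
    refine ⟨y, ⟨n + K + 1, by omega, fun i => ?_⟩, ⟨K, by omega, ?_⟩⟩
    · -- y ∈ G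
      rw [mapPowAux]
      have key : (Q ^ (n + K + 1)).mulVec y = (Q ^ K).mulVec ((Q ^ n).mulVec x) := by
        rw [Matrix.mulVec_mulVec, ← pow_add]
        have e1 : Q ^ (n + K + 1) = Q ^ n * Q ^ (K + 1) := by
          rw [← pow_add, Nat.add_assoc]
        have e2 : Q ^ (K + n) = Q ^ n * Q ^ K := by rw [← pow_add, Nat.add_comm]
        rw [e1, e2, ← Matrix.mulVec_mulVec, ← Matrix.mulVec_mulVec, hy]
      rw [key, ← mapPowAux]
      exact intEntryAux (M ^ K) ((Q ^ n).mulVec x) z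
        (fun j => by rw [← hz j, mapPowAux]) i
    · -- x - Qy ∈ H
      rw [mapPowAux, Matrix.mulVec_sub, Matrix.mulVec_mulVec, ← pow_succ,
        hy, sub_self]
end

section
/- Let σ be a proper primitive substitution with Vershik map λ_σ on the path space P_σ. For every maximal finite path f with p_max ∉ U(f), and every g ∈ S(f), λ_σ maps U(g) onto U(λ̂_σ(g)), where λ̂_σ(g) is the successor finite path of g; consequently the indicator function χ_{U(f)} ∘ λ_σ⁻¹ equals Σ_{g∈S(f)} χ_{U(λ̂_σ(g))}. -/
/-- The `n`-th iterate of a substitution `σ`. -/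
def substIter {A : Type*} (σ : A → List A) : ℕ → A → List A
  | 0, a => [a]
  | n + 1, a => (substIter σ n a).flatMap σ

/-- A substitution is primitive if there is `n > 0` such that every letter `b`
occurs in `σⁿ(a)` for every `a`. -/
def Primitive {A : Type*} (σ : A → List A) : Prop :=
  ∃ n : ℕ, 0 < n ∧ ∀ a b : A, b ∈ substIter σ n a

/-- A substitution is proper if there are letters `b, c` such that `b` is the
first letter and `c` is the last letter of `σ(a)` for every `a`. -/
def Proper {A : Type*} (σ : A → List A) : Prop :=
  ∃ b c : A, ∀ a : A, (σ a).head? = some b ∧ (σ a).getLast? = some c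

/-- An infinite path in the stationary Bratteli diagram of `σ`, starting at the
top vertex.  For `n ≥ 0`, the edge at level `n + 2` has range the vertex
labelled `a n` and is the `(k n)`-th edge into it, corresponding to the
`(k n)`-th letter of `σ (a n)`, which must be the label `a (n-1)` of its
source (the level-1 edge from the top vertex is uniquely determined). -/
structure InfPath {A : Type*} (σ : A → List A) where
  a : ℕ → A
  k : ℕ → ℕ
  hk : ∀ n, k n < (σ (a n)).length
  compat : ∀ n, (σ (a (n + 1))).get ⟨k (n + 1), hk (n + 1)⟩ = a n

/-- An infinite path is maximal if each of its edges is maximal among the edges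
with the same range. -/
def IsMaxPath {A : Type*} {σ : A → List A} (p : InfPath σ) : Prop :=
  ∀ n, p.k n = (σ (p.a n)).length - 1

/-- An infinite path is minimal if each of its edges is minimal among the edges
with the same range. -/
def IsMinPath {A : Type*} {σ : A → List A} (p : InfPath σ) : Prop :=
  ∀ n, p.k n = 0

/-- A finite path from the top vertex in the stationary Bratteli diagram of
`σ`, consisting of `len` edges at levels `2, …, len + 1` (the level-1 edge
being uniquely determined): for `n < len`, the `n`-th edge has range the
vertex labelled `a n` and is its `(k n)`-th incoming edge, whose source is
labelled by the `(k n)`-th letter of `σ (a n)`. -/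
structure FinPath {A : Type*} (σ : A → List A) where
  len : ℕ
  a : ℕ → A
  k : ℕ → ℕ
  hk : ∀ n, n < len → k n < (σ (a n)).length
  compat : ∀ n (h : n + 1 < len),
    (σ (a (n + 1))).get ⟨k (n + 1), hk (n + 1) h⟩ = a n

/-- The cylinder set `U(f)` of a finite path `f`: the set of infinite paths
whose initial segment is `f`. -/
def Cyl {A : Type*} {σ : A → List A} (f : FinPath σ) : Set (InfPath σ) :=
  {p | ∀ n, n < f.len → p.a n = f.a n ∧ p.k n = f.k n}

/-- A finite path is maximal if each of its edges is maximal in its fiber. -/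
def IsMaxFin {A : Type*} {σ : A → List A} (f : FinPath σ) : Prop :=
  ∀ n, n < f.len → f.k n = (σ (f.a n)).length - 1

/-- `SuccSet f` : the set of finite paths `g` extending `f` whose edges after `f`
are all maximal except the last one, which is not maximal. -/
def SuccSet {A : Type*} {σ : A → List A} (f : FinPath σ) : Set (FinPath σ) :=
  {g | f.len < g.len ∧
    (∀ n, n < f.len → g.a n = f.a n ∧ g.k n = f.k n) ∧
    (∀ n, n < g.len - 1 → g.k n = (σ (g.a n)).length - 1) ∧
    g.k (g.len - 1) + 1 < (σ (g.a (g.len - 1))).length}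

/-- `Succ p q` : `q` is the successor of the (non-maximal) infinite path `p`
under the Vershik map. -/
def Succ {A : Type*} {σ : A → List A} (p q : InfPath σ) : Prop :=
  ∃ m : ℕ,
    (∀ i < m, p.k i = (σ (p.a i)).length - 1) ∧
    p.k m + 1 < (σ (p.a m)).length ∧
    q.a m = p.a m ∧ q.k m = p.k m + 1 ∧
    (∀ i < m, q.k i = 0) ∧
    (∀ i, m < i → q.a i = p.a i ∧ q.k i = p.k i)

/-- `SuccFin g g'` : the finite path `g'` is the successor `λ̂_σ(g)` of the
(non-maximal) finite path `g`: the first non-maximal edge of `g` is replaced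
by its immediate successor, the initial segment by the minimal path, and the
remaining edges are kept. -/
def SuccFin {A : Type*} {σ : A → List A} (g g' : FinPath σ) : Prop :=
  g'.len = g.len ∧
  ∃ m, m < g.len ∧
    (∀ i < m, g.k i = (σ (g.a i)).length - 1) ∧
    g.k m + 1 < (σ (g.a m)).length ∧
    g'.a m = g.a m ∧ g'.k m = g.k m + 1 ∧
    (∀ i < m, g'.k i = 0) ∧
    (∀ i, m < i → i < g.len → g'.a i = g.a i ∧ g'.k i = g.k i)

private lemma listget_congr {A : Type*} {l l' : List A} (h : l = l') {i i' : ℕ}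
    (hi : i = i') (h1 : i < l.length) (h2 : i' < l'.length) :
    l.get ⟨i, h1⟩ = l'.get ⟨i', h2⟩ := by subst h; subst hi; rfl

private lemma infpath_ext {A : Type*} {σ : A → List A} {p q : InfPath σ}
    (ha : ∀ n, p.a n = q.a n) (hk : ∀ n, p.k n = q.k n) : p = q := by
  obtain ⟨pa, pk, h1, h2⟩ := p
  obtain ⟨qa, qk, h3, h4⟩ := q
  simp only at ha hk
  have e1 : pa = qa := funext ha
  subst e1
  have e2 : pk = qk := funext hk
  subst e2
  rfl

/-- If an infinite path agrees with a finite path at level `m` (letter) and on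
all `k`-values up to `m`, then it agrees on all letters up to `m`. -/
private lemma agree_below {A : Type*} {σ : A → List A} (r : InfPath σ) (g : FinPath σ)
    {m : ℕ} (hm : m < g.len) (ham : r.a m = g.a m)
    (hks : ∀ i, i ≤ m → r.k i = g.k i) :
    ∀ i, i ≤ m → r.a i = g.a i := by
  have key : ∀ j, r.a (m - j) = g.a (m - j) := by
    intro j
    induction j with
    | zero => simpa using ham
    | succ j ih =>
      rcases Nat.lt_or_ge j m with hj | hj
      · have h1 : m - (j + 1) + 1 = m - j := by omega
        have hlt : m - (j + 1) + 1 < g.len := by omega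
        have hc := g.compat (m - (j + 1)) hlt
        have hc' := r.compat (m - (j + 1))
        rw [← hc, ← hc']
        exact listget_congr (by rw [h1, ih]) (by rw [h1]; exact hks _ (by omega)) _ _
      · have h1 : m - (j + 1) = m - j := by omega
        rw [h1]; exact ih
  intro i hi
  have := key (m - i)
  rwa [Nat.sub_sub_self hi] at this

/-- Let `σ` be a proper primitive substitution with Vershik map `lam`, and let
`f` be a maximal finite path with the maximal infinite path not in `U(f)`.
For every `g ∈ S(f)` the Vershik map carries `U(g)` onto `U(λ̂_σ(g))`;
consequently the image of `U(f)` under the Vershik map (equivalently, the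
support of `χ_{U(f)} ∘ λ_σ⁻¹`) is the union of the cylinder sets
`U(λ̂_σ(g))`, `g ∈ S(f)`. -/
theorem vershik_image_cyl {A : Type*} (σ : A → List A)
    (hne : ∀ a, σ a ≠ []) (hproper : Proper σ) (hprim : Primitive σ)
    (lam : InfPath σ → InfPath σ)
    (hmax : ∀ p, IsMaxPath p → IsMinPath (lam p))
    (hsucc : ∀ p, ¬ IsMaxPath p → Succ p (lam p))
    (f : FinPath σ) (hflen : 0 < f.len) (hfmax : IsMaxFin f)
    (hpmax : ∀ p : InfPath σ, IsMaxPath p → p ∉ Cyl f) :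
    (∀ g ∈ SuccSet f, ∀ g', SuccFin g g' → lam '' Cyl g = Cyl g') ∧
    lam '' Cyl f = {p | ∃ g ∈ SuccSet f, ∃ g', SuccFin g g' ∧ p ∈ Cyl g'} := by
  classical
  have hlen : ∀ a : A, 0 < (σ a).length := fun a => List.length_pos_iff.2 (hne a)
  have part1 : ∀ g ∈ SuccSet f, ∀ g', SuccFin g g' → lam '' Cyl g = Cyl g' := by
    rintro g ⟨hg1, hg2, hg3, hg4⟩ g' ⟨hlen', m, hm, hgmx, hgnon, ham, hkm, hk0, hrest⟩
    have hglen : 2 ≤ g.len := by omega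
    have hm' : m = g.len - 1 := by
      by_contra h
      have h2 : m < g.len - 1 := by omega
      have e := hg3 m h2
      have := hlen (g.a m)
      omega
    subst hm'
    ext q
    constructor
    · rintro ⟨p, hp, rfl⟩
      have hpnm : ¬ IsMaxPath p := by
        intro h
        have h1 := h (g.len - 1)
        have h2 := (hp (g.len - 1) (by omega)).1
        have h3 := (hp (g.len - 1) (by omega)).2
        have := hlen (g.a (g.len - 1))
        rw [h2, h3] at h1
        omega
      obtain ⟨m0, hmx0, hnon0, ea, ek, ek0, erest⟩ := hsucc p hpnm
      have hm0 : m0 = g.len - 1 := by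
        by_contra h
        rcases Nat.lt_or_ge m0 (g.len - 1) with h1 | h1
        · have e1 := (hp m0 (by omega)).1
          have e2 := (hp m0 (by omega)).2
          have e3 := hg3 m0 h1
          have := hlen (g.a m0)
          rw [e1, e2] at hnon0
          omega
        · have h2 : g.len - 1 < m0 := by omega
          have e0 := hmx0 (g.len - 1) h2
          have e1 := (hp (g.len - 1) (by omega)).1
          have e2 := (hp (g.len - 1) (by omega)).2
          have := hlen (g.a (g.len - 1))
          rw [e1, e2] at e0
          omega
      subst hm0
      have hA : (lam p).a (g.len - 1) = g'.a (g.len - 1) := by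
        rw [ea, (hp (g.len - 1) (by omega)).1]; exact ham.symm
      have hK : ∀ i, i ≤ g.len - 1 → (lam p).k i = g'.k i := by
        intro i hi
        rcases Nat.lt_or_ge i (g.len - 1) with h | h
        · rw [ek0 i h, hk0 i h]
        · have hi' : i = g.len - 1 := by omega
          rw [hi', ek, (hp (g.len - 1) (by omega)).2, hkm]
      have hB := agree_below (lam p) g' (by omega) hA hK
      intro n hn
      rw [hlen'] at hn
      rcases Nat.lt_trichotomy n (g.len - 1) with h | h | h
      · exact ⟨hB n (le_of_lt h), hK n (le_of_lt h)⟩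
      · exact ⟨h ▸ hA, hK n (le_of_eq h)⟩
      · omega
    · intro hq
      set pa : ℕ → A := fun i => if i < g.len then g.a i else q.a i with hpa
      set pk : ℕ → ℕ := fun i => if i < g.len then g.k i else q.k i with hpkdef
      have epa1 : ∀ i, i < g.len → pa i = g.a i := fun i h => if_pos h
      have epa2 : ∀ i, ¬ i < g.len → pa i = q.a i := fun i h => if_neg h
      have epk1 : ∀ i, i < g.len → pk i = g.k i := fun i h => if_pos h
      have epk2 : ∀ i, ¬ i < g.len → pk i = q.k i := fun i h => if_neg h
      have hpk : ∀ n, pk n < (σ (pa n)).length := by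
        intro n
        by_cases h : n < g.len
        · rw [epa1 n h, epk1 n h]; exact g.hk n h
        · rw [epa2 n h, epk2 n h]; exact q.hk n
      have hpc : ∀ n, (σ (pa (n + 1))).get ⟨pk (n + 1), hpk (n + 1)⟩ = pa n := by
        intro n
        by_cases h1 : n + 1 < g.len
        · have h0 : n < g.len := by omega
          rw [epa1 n h0, ← g.compat n h1]
          exact listget_congr (by rw [epa1 _ h1]) (epk1 _ h1) _ _
        · by_cases h0 : n < g.len
          · have hn : n = g.len - 1 := by omega
            have e : q.a n = g.a n := by
              rw [(hq n (by rw [hlen']; exact h0)).1, hn]; exact ham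
            rw [epa1 n h0, ← e, ← q.compat n]
            exact listget_congr (by rw [epa2 _ h1]) (epk2 _ h1) _ _
          · rw [epa2 n h0, ← q.compat n]
            exact listget_congr (by rw [epa2 _ h1]) (epk2 _ h1) _ _
      set p : InfPath σ := ⟨pa, pk, hpk, hpc⟩ with hpdef
      have hpa' : ∀ n, p.a n = pa n := fun n => rfl
      have hpk' : ∀ n, p.k n = pk n := fun n => rfl
      have hpCyl : p ∈ Cyl g := fun n hn => ⟨epa1 n hn, epk1 n hn⟩
      have hpnm : ¬ IsMaxPath p := by
        intro h
        have h1 := h (g.len - 1)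
        rw [hpa', hpk', epa1 _ (by omega), epk1 _ (by omega)] at h1
        omega
      obtain ⟨m0, hmx0, hnon0, ea, ek, ek0, erest⟩ := hsucc p hpnm
      have hm0 : m0 = g.len - 1 := by
        by_contra h
        rcases Nat.lt_or_ge m0 (g.len - 1) with h1 | h1
        · have e3 := hg3 m0 h1
          have := hlen (g.a m0)
          rw [hpa', hpk', epa1 _ (by omega), epk1 _ (by omega)] at hnon0
          omega
        · have h2 : g.len - 1 < m0 := by omega
          have e0 := hmx0 (g.len - 1) h2
          have := hlen (g.a (g.len - 1))
          rw [hpa', hpk', epa1 _ (by omega), epk1 _ (by omega)] at e0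
          omega
      subst hm0
      refine ⟨p, hpCyl, ?_⟩
      have hqk : ∀ n, (lam p).k n = q.k n := by
        intro n
        rcases Nat.lt_trichotomy n (g.len - 1) with h | h | h
        · rw [ek0 n h, (hq n (by rw [hlen']; omega)).2, hk0 n h]
        · subst h
          rw [ek, hpk', epk1 _ (by omega), (hq _ (by rw [hlen']; omega)).2, hkm]
        · have hge : ¬ n < g.len := by omega
          rw [(erest n h).2, hpk', epk2 n hge]
      have hA : (lam p).a (g.len - 1) = g'.a (g.len - 1) := by
        rw [ea, hpa', epa1 _ (by omega)]; exact ham.symm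
      have hK : ∀ i, i ≤ g.len - 1 → (lam p).k i = g'.k i := by
        intro i hi
        rcases Nat.lt_or_ge i (g.len - 1) with h | h
        · rw [ek0 i h, hk0 i h]
        · have hi' : i = g.len - 1 := by omega
          rw [hi', ek, hpk', epk1 _ (by omega), hkm]
      have hB := agree_below (lam p) g'
        (show g.len - 1 < g'.len by rw [hlen']; omega) hA hK
      refine infpath_ext (fun n => ?_) hqk
      rcases Nat.lt_or_ge n g.len with h | h
      · rw [hB n (by omega), (hq n (by rw [hlen']; exact h)).1]
      · rw [(erest n (by omega)).1, hpa', epa2 n (by omega)]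
  refine ⟨part1, ?_⟩
  ext q
  constructor
  · rintro ⟨p, hp, rfl⟩
    have hpnm : ¬ IsMaxPath p := fun h => hpmax p h hp
    obtain ⟨m, hmx, hnon, ea, ek, ek0, erest⟩ := hsucc p hpnm
    have hmge : f.len ≤ m := by
      by_contra h
      push_neg at h
      have e1 := (hp m h).1
      have e2 := (hp m h).2
      have e3 := hfmax m h
      have := hlen (f.a m)
      rw [e1, e2] at hnon
      omega
    refine ⟨⟨m + 1, p.a, p.k, fun n _ => p.hk n, fun n _ => p.compat n⟩, ?_,
      ⟨m + 1, (lam p).a, (lam p).k, fun n _ => (lam p).hk n,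
        fun n _ => (lam p).compat n⟩, ?_, fun n _ => ⟨rfl, rfl⟩⟩
    · refine ⟨by dsimp only; omega, fun n hn => hp n hn, fun n hn => ?_, ?_⟩
      · exact hmx n (by dsimp only at hn; omega)
      · dsimp only
        have h1 : m + 1 - 1 = m := by omega
        rw [h1]; exact hnon
    · refine ⟨rfl, m, by dsimp only; omega, fun i hi => hmx i hi, hnon, ea, ek, ek0,
        fun i h1 h2 => absurd h2 (by dsimp only; omega)⟩
  · rintro ⟨g, hg, g', hgg', hq⟩
    rw [← part1 g hg g' hgg'] at hq
    obtain ⟨p, hp, rfl⟩ := hq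
    refine ⟨p, fun n hn => ?_, rfl⟩
    obtain ⟨e1, e2⟩ := hp n (lt_trans hn hg.1)
    obtain ⟨e3, e4⟩ := hg.2.1 n hn
    exact ⟨e1.trans e3, e2.trans e4⟩
end
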